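/- Let P be a Laurent polynomial over ℤ in the variable a such that P - 1 is divisible by a¹² - 1 in the ring of Laurent polynomials ℤ[a, a⁻¹]. Then the span of P (the difference between the largest and smallest exponents with nonzero coefficient, with span of the zero polynomial taken to be 0) is neither 4 nor 8. -/

import Mathlib

/-!
Reducing exponents modulo `n` is a ring homomorphism `R[T;T⁻¹] → R[ZMod n]` that kills
`T n - 1`, so it sends `P` to `1`. If the span of `P` is less than `n`, the reduction is
injective on the support of `P`, whence `P` is a monomial and its span is `0`.
-/

open LaurentPolynomial

/-- The span of a Laurent polynomial: the difference between the largest and smallest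
exponents appearing with nonzero coefficient (with span of `0` taken to be `0`). -/
noncomputable def laurentSpan (P : LaurentPolynomial ℤ) : ℤ :=
  (P.coeff.support.max.getD 0) - (P.coeff.support.min.getD 0)

open AddMonoidAlgebra

variable {R : Type*} [CommRing R]

noncomputable def reduceExponents (n : ℕ) : R[T;T⁻¹] →+* R[ZMod n] :=
  mapDomainRingHom R (Int.castAddHom (ZMod n))

theorem reduceExponents_T (n : ℕ) (k : ℤ) :
    reduceExponents n (T k : R[T;T⁻¹]) = single (k : ZMod n) 1 :=
  mapDomain_single

theorem reduceExponents_eq_one_of_dvd {n : ℕ} {P : R[T;T⁻¹]} (h : (T n - 1) ∣ (P - 1)) :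
    reduceExponents n P = 1 := by
  have hT : reduceExponents n (T n - 1 : R[T;T⁻¹]) = 0 := by
    rw [map_sub, map_one, reduceExponents_T, Int.cast_natCast, ZMod.natCast_self, ← one_def,
      sub_self]
  obtain ⟨Q, hQ⟩ := h
  rw [← sub_eq_zero, ← map_one (reduceExponents n), ← map_sub, hQ, map_mul, hT, zero_mul]

theorem card_support_eq_one_of_reduceExponents_eq_one [Nontrivial R] {n : ℕ} {P : R[T;T⁻¹]}
    (hP : reduceExponents n P = 1) (hinj : Set.InjOn (Int.cast : ℤ → ZMod n) P.coeff.support) :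
    P.coeff.support.card = 1 := by
  classical
  have himage : P.coeff.support.image (Int.cast : ℤ → ZMod n) = {0} := by
    rw [← Finsupp.mapDomain_support_of_injOn P.coeff hinj]
    change (reduceExponents n P).coeff.support = _
    rw [hP]
    exact Finsupp.support_single 0 one_ne_zero
  rw [← Finset.card_image_of_injOn hinj, himage, Finset.card_singleton]

theorem injOn_intCast_zmod {n : ℕ} {s : Set ℤ} {m M : ℤ} (hs : s ⊆ Set.Icc m M)
    (hlt : M - m < n) : Set.InjOn (Int.cast : ℤ → ZMod n) s := by
  intro a ha b hb hab
  have hdvd : (n : ℤ) ∣ b - a := (ZMod.intCast_eq_intCast_iff_dvd_sub a b n).mp hab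
  obtain ⟨hma, haM⟩ := hs ha
  obtain ⟨hmb, hbM⟩ := hs hb
  have := Int.eq_zero_of_abs_lt_dvd hdvd (abs_lt.mpr ⟨by omega, by omega⟩)
  omega

theorem laurentSpan_eq_zero_or_le_of_dvd {n : ℕ} {P : ℤ[T;T⁻¹]} (h : (T n - 1) ∣ (P - 1)) :
    laurentSpan P = 0 ∨ n ≤ laurentSpan P := by
  rcases P.coeff.support.eq_empty_or_nonempty with hempty | hne
  · left
    simp only [laurentSpan, hempty, Finset.max_empty, Finset.min_empty]
    rfl
  obtain ⟨M, hM⟩ := Finset.max_of_nonempty hne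
  obtain ⟨m, hm⟩ := Finset.min_of_nonempty hne
  have hspan : laurentSpan P = M - m := by rw [laurentSpan, hM, hm]; rfl
  rw [hspan, or_iff_not_imp_right, not_le]
  intro hlt
  have hbounds : (P.coeff.support : Set ℤ) ⊆ Set.Icc m M := fun x hx =>
    ⟨Finset.min_le_of_eq hx hm, Finset.le_max_of_eq hx hM⟩
  obtain ⟨x, hx⟩ := Finset.card_eq_one.mp <| card_support_eq_one_of_reduceExponents_eq_one
    (reduceExponents_eq_one_of_dvd h) (injOn_intCast_zmod hbounds hlt)
  rw [hx] at hM hm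
  simp only [Finset.max_singleton, Finset.min_singleton, WithBot.coe_inj, WithTop.coe_inj] at hM hm
  omega

theorem stmt_3 (P : LaurentPolynomial ℤ)
    (h : (T 12 - 1 : LaurentPolynomial ℤ) ∣ (P - 1)) :
    laurentSpan P ≠ 4 ∧ laurentSpan P ≠ 8 := by
  have := laurentSpan_eq_zero_or_le_of_dvd (n := 12) h
  omega
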